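/- Let f : ℝ → ℝ be concave on ℝ and suppose f is affine with slope q_c on a nondegenerate interval: there exist α_l < α_h and c ∈ ℝ with f(α) = q_c·α + c for all α ∈ [α_l, α_h]. Suppose moreover that τ(q) = inf_{β ∈ ℝ} (q·β − f(β)) is finite for every q ∈ ℝ. Then τ : ℝ → ℝ is not differentiable at q_c. -/

import Mathlib

/-!
On `[αl, αh]` the concave function `f` coincides with the line `qc·β + c`, so by concavity
`f ≤ qc·β + c` everywhere and `τ(qc) = -c`. Hence for every `β₀ ∈ [αl, αh]`,
`τ(q) ≤ q·β₀ - f(β₀) = τ(qc) + (q - qc)·β₀`: both `αl` and `αh` are supergradients of `τ` at `qc`.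
A function differentiable at a point has its derivative as its only supergradient there.
-/

open Set Filter Topology

theorem ConcaveOn.le_of_eq_affine_of_notMem_Ioo {s : Set ℝ} {f : ℝ → ℝ} (hf : ConcaveOn ℝ s f)
    {a b m c x : ℝ} (ha : a ∈ s) (hb : b ∈ s) (hx : x ∈ s) (hab : a < b)
    (hfa : f a = m * a + c) (hfb : f b = m * b + c) (hxab : x ∉ Ioo a b) :
    f x ≤ m * x + c := by
  have hslope : (f b - f a) / (b - a) = m := by
    rw [hfa, hfb, div_eq_iff (sub_ne_zero.mpr hab.ne')]; ring
  rcases lt_or_ge x a with hxa | hax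
  · have := hf.slope_anti_adjacent hx hb hxa hab
    rw [hslope, le_div_iff₀ (sub_pos.mpr hxa), hfa] at this
    linarith
  rcases eq_or_lt_of_le hax with rfl | hax
  · exact hfa.le
  have hbx : b ≤ x := not_lt.mp fun hxb => hxab ⟨hax, hxb⟩
  rcases eq_or_lt_of_le hbx with rfl | hbx
  · exact hfb.le
  have := hf.slope_anti_adjacent ha hx hab hbx
  rw [hslope, div_le_iff₀ (sub_pos.mpr hbx), hfb] at this
  linarith

theorem ConcaveOn.le_of_eqOn_Icc {f : ℝ → ℝ} (hf : ConcaveOn ℝ univ f) {a b m c : ℝ}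
    (hab : a < b) (haff : ∀ x ∈ Icc a b, f x = m * x + c) (x : ℝ) : f x ≤ m * x + c := by
  by_cases hx : x ∈ Ioo a b
  · exact (haff x (Ioo_subset_Icc_self hx)).le
  exact hf.le_of_eq_affine_of_notMem_Ioo (mem_univ a) (mem_univ b) (mem_univ x) hab
    (haff a (left_mem_Icc.mpr hab.le)) (haff b (right_mem_Icc.mpr hab.le)) hx

theorem HasDerivAt.eq_of_eventually_le {g : ℝ → ℝ} {x d s : ℝ} (hg : HasDerivAt g d x)
    (hs : ∀ᶠ y in 𝓝 x, g y ≤ g x + s * (y - x)) : d = s := by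
  have hmax : IsLocalMax (fun y => g y - s * (y - x)) x := by
    filter_upwards [hs] with y hy
    simp only [sub_self, mul_zero, sub_zero]
    linarith
  have hderiv : HasDerivAt (fun y => g y - s * (y - x)) (d - s * 1) x :=
    hg.sub (((hasDerivAt_id x).sub_const x).const_mul s)
  linarith [hmax.hasDerivAt_eq_zero hderiv]

/-- Where `q·β − f(β)` is unbounded below, `iInf` gives the junk value `0`. -/
noncomputable def freeEnergy (f : ℝ → ℝ) (q : ℝ) : ℝ :=
  ⨅ β : ℝ, (q * β - f β)

theorem freeEnergy_le {f : ℝ → ℝ} {q : ℝ} (hbdd : BddBelow (range fun β : ℝ => q * β - f β))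
    (β : ℝ) : freeEnergy f q ≤ q * β - f β :=
  ciInf_le hbdd β

theorem freeEnergy_eq_neg_of_le_affine {f : ℝ → ℝ} {m c β₀ : ℝ} (hle : ∀ β, f β ≤ m * β + c)
    (hβ₀ : f β₀ = m * β₀ + c) : freeEnergy f m = -c := by
  have hbdd : BddBelow (range fun β : ℝ => m * β - f β) := by
    refine ⟨-c, ?_⟩
    rintro _ ⟨β, rfl⟩
    linarith [hle β]
  refine le_antisymm ?_ (le_ciInf fun β => by linarith [hle β])
  linarith [freeEnergy_le hbdd β₀]

theorem freeEnergy_le_add_mul {f : ℝ → ℝ} {m c β₀ : ℝ} (hle : ∀ β, f β ≤ m * β + c)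
    (hβ₀ : f β₀ = m * β₀ + c) {q : ℝ} (hbdd : BddBelow (range fun β : ℝ => q * β - f β)) :
    freeEnergy f q ≤ freeEnergy f m + β₀ * (q - m) := by
  rw [freeEnergy_eq_neg_of_le_affine hle hβ₀]
  linarith [freeEnergy_le hbdd β₀]

/-- If `f` is concave on `ℝ` and affine with slope `q_c` on a nondegenerate
interval `[α_l, α_h]`, and its free energy `τ(q) = inf_β (q·β − f(β))` is finite
everywhere, then `τ` is not differentiable at `q_c`. -/
theorem freeEnergy_not_differentiableAt_of_affine_part
    (f : ℝ → ℝ) (hf : ConcaveOn ℝ Set.univ f)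
    (αl αh qc c : ℝ) (hlt : αl < αh)
    (haff : ∀ α ∈ Set.Icc αl αh, f α = qc * α + c)
    (hbdd : ∀ q : ℝ, BddBelow (Set.range fun β : ℝ => q * β - f β)) :
    ¬ ∃ d : ℝ, HasDerivAt (fun q : ℝ => ⨅ β : ℝ, (q * β - f β)) d qc := by
  rintro ⟨d, hd⟩
  have hle := hf.le_of_eqOn_Icc hlt haff
  have hderiv_eq : ∀ β₀ ∈ Icc αl αh, d = β₀ := fun β₀ hβ₀ =>
    HasDerivAt.eq_of_eventually_le (g := freeEnergy f) hd
      (Eventually.of_forall fun q => freeEnergy_le_add_mul hle (haff β₀ hβ₀) (hbdd q))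
  have hl := hderiv_eq αl (left_mem_Icc.mpr hlt.le)
  have hh := hderiv_eq αh (right_mem_Icc.mpr hlt.le)
  exact hlt.ne (hl.symm.trans hh)
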